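/- arXiv:2003.07236 — 6 statements merged into one kernel-verified Lean document; each statement's English description precedes it below -/
import Mathlib

section
/- Let L > 0 and set λ = (2π/L)⁴. For any two twice continuously differentiable L-periodic mean-zero functions u, v : ℝ → ℝ and any t ∈ [0,1], the energy φ satisfies the λ-convexity inequality φ((1−t)u + t v) ≤ (1−t)φ(u) + t φ(v) − (λ/2) t(1−t) ∫₀ᴸ (u(x) − v(x))² dx. -/
/-!
Since `cosh'' = cosh ≥ 1`, the function `cosh x - x²/2` is convex, i.e. `cosh` is `1`-strongly
convex. Applying this pointwise to `u''` and `v''` and integrating gives the convexity inequality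
with the deficit `t(1-t)/2 ∫ (u'' - v'')²`. Finally `w = u - v` and `w'` are periodic with mean
zero, so Wirtinger's inequality `(2π/L)² ∫ w² ≤ ∫ w'²` (from Parseval, since the `n`-th Fourier
coefficient of `w'` is `2πin/L` times that of `w` and the zeroth one vanishes) applied twice gives
`(2π/L)⁴ ∫ (u - v)² ≤ ∫ (u'' - v'')²`.
-/

open MeasureTheory Real Set

lemma ContinuousOn.memLp_restrict_Icc {E : Type*} [NormedAddCommGroup E] {f : ℝ → E} {a b : ℝ}
    (hf : ContinuousOn f (Icc a b)) (p : ENNReal) : MemLp f p (volume.restrict (Icc a b)) := by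
  obtain ⟨C, hC⟩ := isCompact_Icc.exists_bound_of_continuousOn hf
  exact .of_bound (hf.aestronglyMeasurable measurableSet_Icc) C
    (ae_restrict_of_forall_mem measurableSet_Icc hC)

theorem Function.Periodic.deriv {𝕜 F : Type*} [NontriviallyNormedField 𝕜] [NormedAddCommGroup F]
    [NormedSpace 𝕜 F] {f : 𝕜 → F} {c : 𝕜} (h : Function.Periodic f c) :
    Function.Periodic (deriv f) c := fun x => by
  rw [← deriv_comp_add_const, h.funext]

section Wirtinger

variable {a b : ℝ}

lemma fourierCoeffOn_zero_eq_zero_of_integral_eq_zero (hab : a < b) {f : ℝ → ℂ}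
    (hf : ∫ x in a..b, f x = 0) : fourierCoeffOn hab f 0 = 0 := by
  simp [fourierCoeffOn_eq_integral, hf]

lemma sq_mul_norm_fourierCoeffOn_sq_le (hab : a < b) {f f' : ℝ → ℂ}
    (hf : ∀ x ∈ uIcc a b, HasDerivAt f (f' x) x) (hf' : IntervalIntegrable f' volume a b)
    (hfab : f b = f a) (hmean : ∫ x in a..b, f x = 0) (n : ℤ) :
    (2 * π / (b - a)) ^ 2 * ‖fourierCoeffOn hab f n‖ ^ 2 ≤ ‖fourierCoeffOn hab f' n‖ ^ 2 := by
  rcases eq_or_ne n 0 with rfl | hn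
  · simp [fourierCoeffOn_zero_eq_zero_of_integral_eq_zero hab hmean]
  have hcoeff := fourierCoeffOn_of_hasDerivAt hab hn hf hf'
  rw [hfab, sub_self, mul_zero, zero_sub] at hcoeff
  have hn1 : (1 : ℝ) ≤ |(n : ℝ)| := by exact_mod_cast Int.one_le_abs hn
  have hnorm : 2 * π / (b - a) * ‖fourierCoeffOn hab f n‖
      = ‖fourierCoeffOn hab f' n‖ / |(n : ℝ)| := by
    have hba : 0 < b - a := sub_pos.mpr hab
    rw [hcoeff]
    simp [← Complex.ofReal_sub, abs_of_pos pi_pos, abs_of_pos hba]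
    field_simp
  rw [← mul_pow, hnorm, div_pow]
  exact div_le_self (sq_nonneg _) (one_le_pow₀ hn1)

theorem wirtinger_inequality_complex (hab : a < b) {f f' : ℝ → ℂ}
    (hf : ∀ x ∈ uIcc a b, HasDerivAt f (f' x) x) (hf' : ContinuousOn f' (uIcc a b))
    (hfab : f b = f a) (hmean : ∫ x in a..b, f x = 0) :
    (2 * π / (b - a)) ^ 2 * ∫ x in a..b, ‖f x‖ ^ 2 ≤ ∫ x in a..b, ‖f' x‖ ^ 2 := by
  have hcoeff := sq_mul_norm_fourierCoeffOn_sq_le hab hf (hf'.intervalIntegrable) hfab hmean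
  rw [uIcc_of_lt hab] at hf hf'
  have hmemLp {g : ℝ → ℂ} (hg : ContinuousOn g (Icc a b)) :
      MemLp g 2 (volume.restrict (Ioc a b)) :=
    (hg.memLp_restrict_Icc 2).mono_measure (Measure.restrict_mono Ioc_subset_Icc_self le_rfl)
  have hfc : ContinuousOn f (Icc a b) := fun x hx => (hf x hx).continuousAt.continuousWithinAt
  have hparseval := hasSum_le hcoeff
    ((hasSum_sq_fourierCoeffOn hab (hmemLp hfc)).mul_left _)
    (hasSum_sq_fourierCoeffOn hab (hmemLp hf'))
  rwa [smul_eq_mul, smul_eq_mul, mul_left_comm,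
    mul_le_mul_iff_right₀ (inv_pos.mpr (sub_pos.mpr hab))] at hparseval

theorem wirtinger_inequality (hab : a < b) {f f' : ℝ → ℝ}
    (hf : ∀ x ∈ uIcc a b, HasDerivAt f (f' x) x) (hf' : ContinuousOn f' (uIcc a b))
    (hfab : f b = f a) (hmean : ∫ x in a..b, f x = 0) :
    (2 * π / (b - a)) ^ 2 * ∫ x in a..b, f x ^ 2 ≤ ∫ x in a..b, f' x ^ 2 := by
  have h := wirtinger_inequality_complex hab (f := fun x => (f x : ℂ)) (f' := fun x => (f' x : ℂ))
    (fun x hx => (hf x hx).ofReal_comp) (Complex.continuous_ofReal.comp_continuousOn hf')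
    (by rw [hfab]) (by rw [intervalIntegral.integral_ofReal, hmean, Complex.ofReal_zero])
  simpa only [Complex.norm_real, Real.norm_eq_abs, sq_abs] using h

end Wirtinger

theorem wirtinger_inequality_deriv_deriv {L : ℝ} (hL : 0 < L) {f : ℝ → ℝ} (hf : ContDiff ℝ 2 f)
    (hp : Function.Periodic f L) (hmean : ∫ x in (0 : ℝ)..L, f x = 0) :
    (2 * π / L) ^ 4 * ∫ x in (0 : ℝ)..L, f x ^ 2 ≤ ∫ x in (0 : ℝ)..L, deriv (deriv f) x ^ 2 := by
  have hf' : ContDiff ℝ 1 (deriv f) := hf.deriv'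
  have hperiod {g : ℝ → ℝ} (hg : Function.Periodic g L) : g L = g 0 := by simpa using hg 0
  have hmean' : ∫ x in (0 : ℝ)..L, deriv f x = 0 := by
    rw [intervalIntegral.integral_deriv_eq_sub (fun x _ => hf.differentiable two_ne_zero x)
      (hf'.continuous.intervalIntegrable _ _), hperiod hp, sub_self]
  have h1 := wirtinger_inequality hL (f := f) (f' := deriv f)
    (fun x _ => (hf.differentiable two_ne_zero x).hasDerivAt) hf'.continuous.continuousOn
    (hperiod hp) hmean
  have h2 := wirtinger_inequality hL (f := deriv f) (f' := deriv (deriv f))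
    (fun x _ => (hf'.differentiable one_ne_zero x).hasDerivAt)
    hf'.continuous_deriv_one.continuousOn (hperiod hp.deriv) hmean'
  rw [sub_zero] at h1 h2
  calc (2 * π / L) ^ 4 * ∫ x in (0 : ℝ)..L, f x ^ 2
      = (2 * π / L) ^ 2 * ((2 * π / L) ^ 2 * ∫ x in (0 : ℝ)..L, f x ^ 2) := by ring
    _ ≤ (2 * π / L) ^ 2 * ∫ x in (0 : ℝ)..L, deriv f x ^ 2 := by gcongr
    _ ≤ _ := h2

theorem strongConvexOn_cosh : StrongConvexOn univ 1 cosh := by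
  rw [strongConvexOn_iff_convex]
  simp only [Real.norm_eq_abs, sq_abs]
  have hderiv : deriv (fun x => cosh x - 1 / 2 * x ^ 2) = fun x => sinh x - x := funext fun x => by
    rw [((hasDerivAt_cosh x).fun_sub ((hasDerivAt_pow 2 x).const_mul (1 / 2 : ℝ))).deriv]
    ring
  refine convexOn_univ_of_deriv2_nonneg (by fun_prop) (by rw [hderiv]; fun_prop) fun x => ?_
  have hderiv2 : deriv (fun x => sinh x - x) x = cosh x - 1 := by simp
  simp only [Function.iterate_succ, Function.iterate_zero, Function.comp_apply, id, hderiv, hderiv2]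
  linarith [one_le_cosh x]

theorem StrongConvexOn.intervalIntegral_comp_le {φ : ℝ → ℝ} {m : ℝ}
    (hφ : StrongConvexOn univ m φ) (hφc : Continuous φ) {a b : ℝ} (hab : a ≤ b) {f g : ℝ → ℝ}
    (hf : ContinuousOn f (uIcc a b)) (hg : ContinuousOn g (uIcc a b)) {s t : ℝ} (hs : 0 ≤ s)
    (ht : 0 ≤ t) (hst : s + t = 1) :
    ∫ x in a..b, φ (s * f x + t * g x)
      ≤ s * (∫ x in a..b, φ (f x)) + t * (∫ x in a..b, φ (g x))
        - s * t * (m / 2) * ∫ x in a..b, (f x - g x) ^ 2 := by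
  have hφf : ContinuousOn (fun x => s * φ (f x)) (uIcc a b) :=
    continuousOn_const.mul (hφc.comp_continuousOn hf)
  have hφg : ContinuousOn (fun x => t * φ (g x)) (uIcc a b) :=
    continuousOn_const.mul (hφc.comp_continuousOn hg)
  have hfg : ContinuousOn (fun x => s * t * (m / 2) * (f x - g x) ^ 2) (uIcc a b) :=
    continuousOn_const.mul ((hf.sub hg).pow 2)
  calc ∫ x in a..b, φ (s * f x + t * g x)
      ≤ ∫ x in a..b, (s * φ (f x) + t * φ (g x) - s * t * (m / 2) * (f x - g x) ^ 2) := by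
        refine intervalIntegral.integral_mono_on hab ?_ ((hφf.fun_add hφg).fun_sub hfg).intervalIntegrable
          fun x _ => ?_
        · exact (hφc.comp_continuousOn
            ((continuousOn_const.mul hf).add (continuousOn_const.mul hg))).intervalIntegrable
        · simpa [mul_assoc] using hφ.2 (mem_univ (f x)) (mem_univ (g x)) hs ht hst
    _ = _ := by
        rw [intervalIntegral.integral_sub (hφf.fun_add hφg).intervalIntegrable hfg.intervalIntegrable,
          intervalIntegral.integral_add hφf.intervalIntegrable hφg.intervalIntegrable,
          intervalIntegral.integral_const_mul, intervalIntegral.integral_const_mul,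
          intervalIntegral.integral_const_mul]

theorem deriv_const_mul_add_const_mul {u v : ℝ → ℝ} (hu : Differentiable ℝ u)
    (hv : Differentiable ℝ v) (a b : ℝ) :
    deriv (fun y => a * u y + b * v y) = fun y => a * deriv u y + b * deriv v y :=
  funext fun x => (((hu x).hasDerivAt.const_mul a).add ((hv x).hasDerivAt.const_mul b)).deriv

theorem deriv_fun_sub_eq {u v : ℝ → ℝ} (hu : Differentiable ℝ u) (hv : Differentiable ℝ v) :
    deriv (fun y => u y - v y) = fun y => deriv u y - deriv v y :=
  funext fun x => deriv_fun_sub (hu x) (hv x)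

/-- λ-convexity of the energy φ(g) = ∫₀ᴸ cosh(g'') with
λ = (2π/L)⁴, for C² L-periodic mean-zero functions. -/
theorem lambda_convexity_of_energy
    (L : ℝ) (hL : 0 < L)
    (u v : ℝ → ℝ)
    (hu : ContDiff ℝ 2 u) (hup : Function.Periodic u L)
    (hum : ∫ x in (0:ℝ)..L, u x = 0)
    (hv : ContDiff ℝ 2 v) (hvp : Function.Periodic v L)
    (hvm : ∫ x in (0:ℝ)..L, v x = 0)
    (t : ℝ) (ht : t ∈ Set.Icc (0:ℝ) 1) :
    (∫ x in (0:ℝ)..L,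
        Real.cosh (deriv (deriv (fun y => (1 - t) * u y + t * v y)) x))
      ≤ (1 - t) * (∫ x in (0:ℝ)..L, Real.cosh (deriv (deriv u) x))
        + t * (∫ x in (0:ℝ)..L, Real.cosh (deriv (deriv v) x))
        - ((2 * Real.pi / L) ^ 4 / 2) * t * (1 - t)
            * ∫ x in (0:ℝ)..L, (u x - v x) ^ 2 := by
  obtain ⟨ht0, ht1⟩ := ht
  have hu' := hu.differentiable two_ne_zero
  have hv' := hv.differentiable two_ne_zero
  rw [deriv_const_mul_add_const_mul hu' hv',
    deriv_const_mul_add_const_mul hu.differentiable_deriv_two hv.differentiable_deriv_two]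
  have hconvex := strongConvexOn_cosh.intervalIntegral_comp_le continuous_cosh hL.le
    hu.deriv'.continuous_deriv_one.continuousOn hv.deriv'.continuous_deriv_one.continuousOn
    (sub_nonneg.2 ht1) ht0 (sub_add_cancel 1 t)
  have hwirtinger := wirtinger_inequality_deriv_deriv hL (hu.sub hv) (hup.sub hvp) (by
    rw [intervalIntegral.integral_sub (hu.continuous.intervalIntegrable _ _)
      (hv.continuous.intervalIntegrable _ _), hum, hvm, sub_zero])
  rw [deriv_fun_sub_eq hu' hv',
    deriv_fun_sub_eq hu.differentiable_deriv_two hv.differentiable_deriv_two] at hwirtinger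
  nlinarith [mul_le_mul_of_nonneg_left hwirtinger (mul_nonneg ht0 (sub_nonneg.2 ht1))]
end

section
/- Let L > 0 and let h be a smooth solution of the Metropolis crystal-surface PDE on t ≥ 0. Then for every t ≥ 0 the energy dissipation identity holds: d/dt ∫₀ᴸ cosh(∂ₓₓ h(t,x)) dx = − ∫₀ᴸ (∂ₜ h(t,x))² dx. In particular the energy t ↦ ∫₀ᴸ cosh(∂ₓₓ h(t,x)) dx is nonincreasing, so ∫₀ᴸ cosh(∂ₓₓ h(t,x)) dx ≤ ∫₀ᴸ cosh(∂ₓₓ h(0,x)) dx for all t ≥ 0. -/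
open Real

noncomputable def pd (v : ℝ × ℝ) (f : ℝ × ℝ → ℝ) : ℝ × ℝ → ℝ := fun p => fderiv ℝ f p v

lemma contDiff_pd (v : ℝ × ℝ) {f : ℝ × ℝ → ℝ} (hf : ContDiff ℝ (⊤ : ℕ∞) f) :
    ContDiff ℝ (⊤ : ℕ∞) (pd v f) :=
  (hf.fderiv_right (by simp)).clm_apply contDiff_const

lemma pd_apply_eq (a : ℝ × ℝ) {f : ℝ × ℝ → ℝ} (hf : ContDiff ℝ (⊤ : ℕ∞) f) (b p : ℝ × ℝ) :
    pd a (pd b f) p = fderiv ℝ (fderiv ℝ f) p a b := by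
  have hd : ContDiff ℝ (⊤ : ℕ∞) (fderiv ℝ f) := hf.fderiv_right (by simp)
  have : pd a (pd b f) p = fderiv ℝ (fun q => (fderiv ℝ f q) b) p a := rfl
  rw [this, fderiv_clm_apply ((hd.differentiable (by simp)) p) (differentiableAt_const b)]
  simp

lemma pd_swap (v w : ℝ × ℝ) {f : ℝ × ℝ → ℝ} (hf : ContDiff ℝ (⊤ : ℕ∞) f) (p : ℝ × ℝ) :
    pd v (pd w f) p = pd w (pd v f) p := by
  rw [pd_apply_eq v hf w p, pd_apply_eq w hf v p]
  exact (hf.contDiffAt.isSymmSndFDerivAt (by rw [minSmoothness_of_isRCLikeNormedField]; exact WithTop.coe_le_coe.mpr le_top)) v w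

lemma hasDerivAt_pd_fst {f : ℝ × ℝ → ℝ} (hf : ContDiff ℝ (⊤ : ℕ∞) f) (t x : ℝ) :
    HasDerivAt (fun s => f (s, x)) (pd (1, 0) f (t, x)) t := by
  have h1 : HasFDerivAt f (fderiv ℝ f (t, x)) (t, x) :=
    ((hf.differentiable (by simp)) (t, x)).hasFDerivAt
  have h2 : HasDerivAt (fun s : ℝ => (s, x)) (((1 : ℝ), (0 : ℝ)) : ℝ × ℝ) t :=
    (hasDerivAt_id t).prodMk (hasDerivAt_const t x)
  exact h1.comp_hasDerivAt t h2

lemma hasDerivAt_pd_snd {f : ℝ × ℝ → ℝ} (hf : ContDiff ℝ (⊤ : ℕ∞) f) (t x : ℝ) :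
    HasDerivAt (fun y => f (t, y)) (pd (0, 1) f (t, x)) x := by
  have h1 : HasFDerivAt f (fderiv ℝ f (t, x)) (t, x) :=
    ((hf.differentiable (by simp)) (t, x)).hasFDerivAt
  have h2 : HasDerivAt (fun y : ℝ => (t, y)) (((0 : ℝ), (1 : ℝ)) : ℝ × ℝ) x :=
    (hasDerivAt_const x t).prodMk (hasDerivAt_id x)
  exact h1.comp_hasDerivAt x h2

lemma periodic_deriv' {f : ℝ → ℝ} {c : ℝ} (hf : Function.Periodic f c) :
    Function.Periodic (deriv f) c := by
  intro x
  conv_lhs => rw [← deriv_comp_add_const]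
  have : (fun y => f (y + c)) = f := funext fun y => hf y
  rw [this]

/-- energy dissipation identity
d/dt ∫₀ᴸ cosh(∂ₓₓh(t,x)) dx = −∫₀ᴸ (∂ₜh(t,x))² dx for smooth solutions of
the Metropolis crystal-surface PDE; in particular the energy is nonincreasing. -/
theorem energy_dissipation
    (L : ℝ) (hL : 0 < L)
    (h : ℝ → ℝ → ℝ)
    (hsmooth : ContDiff ℝ (⊤ : ℕ∞) (fun p : ℝ × ℝ => h p.1 p.2))
    (hper : ∀ t x, h t (x + L) = h t x)
    (hpde : ∀ t x, 0 ≤ t →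
      deriv (fun s => h s x) t
        = - deriv (deriv (fun y => Real.sinh (deriv (deriv (h t)) y))) x) :
    (∀ t, 0 ≤ t →
      HasDerivAt (fun s => ∫ x in (0:ℝ)..L, Real.cosh (deriv (deriv (h s)) x))
        (- ∫ x in (0:ℝ)..L, (deriv (fun s => h s x) t) ^ 2) t)
    ∧ (∀ t, 0 ≤ t →
      (∫ x in (0:ℝ)..L, Real.cosh (deriv (deriv (h t)) x))
        ≤ ∫ x in (0:ℝ)..L, Real.cosh (deriv (deriv (h 0)) x)) := by
  set U : ℝ × ℝ → ℝ := fun p : ℝ × ℝ => h p.1 p.2 with hU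
  have cu : ContDiff ℝ (⊤ : ℕ∞) U := hsmooth
  have cg1 : ContDiff ℝ (⊤ : ℕ∞) (pd (0,1) U) := contDiff_pd _ cu
  have cg2 : ContDiff ℝ (⊤ : ℕ∞) (pd (0,1) (pd (0,1) U)) := contDiff_pd _ cg1
  have cgt : ContDiff ℝ (⊤ : ℕ∞) (pd (1,0) U) := contDiff_pd _ cu
  have cgt1 : ContDiff ℝ (⊤ : ℕ∞) (pd (0,1) (pd (1,0) U)) := contDiff_pd _ cgt
  have cgt2 : ContDiff ℝ (⊤ : ℕ∞) (pd (0,1) (pd (0,1) (pd (1,0) U))) := contDiff_pd _ cgt1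
  have cg2t : ContDiff ℝ (⊤ : ℕ∞) (pd (1,0) (pd (0,1) (pd (0,1) U))) := contDiff_pd _ cg2
  have cq : ContDiff ℝ (⊤ : ℕ∞) (fun p => Real.sinh (pd (0,1) (pd (0,1) U) p)) :=
    Real.contDiff_sinh.comp cg2
  have cq1 : ContDiff ℝ (⊤ : ℕ∞) (pd (0,1) (fun p => Real.sinh (pd (0,1) (pd (0,1) U) p))) :=
    contDiff_pd _ cq
  have cq2 : ContDiff ℝ (⊤ : ℕ∞)
      (pd (0,1) (pd (0,1) (fun p => Real.sinh (pd (0,1) (pd (0,1) U) p)))) :=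
    contDiff_pd _ cq1
  -- continuity of slices
  have contOf : ∀ {g : ℝ × ℝ → ℝ}, ContDiff ℝ (⊤ : ℕ∞) g → ∀ t : ℝ, Continuous (fun x => g (t, x)) :=
    fun hg t => hg.continuous.comp (continuous_const.prodMk continuous_id)
  -- basic identities
  have F1 : ∀ t x : ℝ, deriv (deriv (h t)) x = pd (0,1) (pd (0,1) U) (t, x) := by
    intro t x
    have e1 : deriv (h t) = fun y => pd (0,1) U (t, y) :=
      funext fun y => (hasDerivAt_pd_snd cu t y).deriv
    rw [e1]
    exact (hasDerivAt_pd_snd cg1 t x).deriv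
  have F2 : ∀ t x : ℝ, deriv (fun s => h s x) t = pd (1,0) U (t, x) :=
    fun t x => (hasDerivAt_pd_fst cu t x).deriv
  have F4 : ∀ t x : ℝ, deriv (deriv (fun y => Real.sinh (deriv (deriv (h t)) y))) x
      = pd (0,1) (pd (0,1) (fun p => Real.sinh (pd (0,1) (pd (0,1) U) p))) (t, x) := by
    intro t x
    have e0 : (fun y => Real.sinh (deriv (deriv (h t)) y))
        = fun y => Real.sinh (pd (0,1) (pd (0,1) U) (t, y)) := by
      funext y; rw [F1]
    have e1 : deriv (fun y => Real.sinh (pd (0,1) (pd (0,1) U) (t, y)))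
        = fun y => pd (0,1) (fun p => Real.sinh (pd (0,1) (pd (0,1) U) p)) (t, y) :=
      funext fun y => (hasDerivAt_pd_snd cq t y).deriv
    rw [e0, e1]
    exact (hasDerivAt_pd_snd cq1 t x).deriv
  have swap : ∀ p : ℝ × ℝ,
      pd (1,0) (pd (0,1) (pd (0,1) U)) p = pd (0,1) (pd (0,1) (pd (1,0) U)) p := by
    intro p
    have s2 : pd (1,0) (pd (0,1) U) = pd (0,1) (pd (1,0) U) :=
      funext fun q => pd_swap _ _ cu q
    rw [pd_swap _ _ cg1 p, s2]
  have PDE' : ∀ t x : ℝ, 0 ≤ t →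
      pd (0,1) (pd (0,1) (fun p => Real.sinh (pd (0,1) (pd (0,1) U) p))) (t, x)
        = - pd (1,0) U (t, x) := by
    intro t x ht
    rw [← F2, ← F4, hpde t x ht, neg_neg]
  -- derivative of the energy, raw form, at any time t
  have hmain : ∀ t : ℝ,
      HasDerivAt (fun s => ∫ x in (0:ℝ)..L, Real.cosh (pd (0,1) (pd (0,1) U) (s, x)))
        (∫ x in (0:ℝ)..L, Real.sinh (pd (0,1) (pd (0,1) U) (t, x))
            * pd (1,0) (pd (0,1) (pd (0,1) U)) (t, x)) t := by
    intro t
    have contφ : Continuous (fun p : ℝ × ℝ =>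
        Real.sinh (pd (0,1) (pd (0,1) U) p) * pd (1,0) (pd (0,1) (pd (0,1) U)) p) :=
      (Real.continuous_sinh.comp cg2.continuous).mul cg2t.continuous
    obtain ⟨C, hC⟩ := ((isCompact_closedBall t 1).prod (isCompact_uIcc (a := (0:ℝ)) (b := L))).exists_bound_of_continuousOn contφ.continuousOn
    have key := intervalIntegral.hasDerivAt_integral_of_dominated_loc_of_deriv_le
      (F := fun s x => Real.cosh (pd (0,1) (pd (0,1) U) (s, x)))
      (F' := fun s x => Real.sinh (pd (0,1) (pd (0,1) U) (s, x))
          * pd (1,0) (pd (0,1) (pd (0,1) U)) (s, x))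
      (bound := fun _ => C) (μ := MeasureTheory.volume) (a := (0:ℝ)) (b := L)
      (x₀ := t) (Metric.ball_mem_nhds t zero_lt_one)
      (Filter.Eventually.of_forall fun s =>
        ((Real.continuous_cosh.comp (contOf cg2 s)).aestronglyMeasurable))
      ((Real.continuous_cosh.comp (contOf cg2 t)).intervalIntegrable _ _)
      ((contφ.comp (continuous_const.prodMk continuous_id)).aestronglyMeasurable)
      (Filter.Eventually.of_forall fun x hx s hs =>
        hC (s, x) ⟨Metric.ball_subset_closedBall hs, Set.Ioc_subset_Icc_self hx⟩)
      intervalIntegrable_const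
      (Filter.Eventually.of_forall fun x _ s _ =>
        (Real.hasDerivAt_cosh _).comp s (hasDerivAt_pd_fst cg2 s x))
    exact key.2
  -- periodicity facts at a fixed time t
  have per_h : ∀ t : ℝ, Function.Periodic (h t) L := fun t x => hper t x
  have per_g2 : ∀ t : ℝ, Function.Periodic (fun x => pd (0,1) (pd (0,1) U) (t, x)) L := by
    intro t
    have e : (fun x => pd (0,1) (pd (0,1) U) (t, x)) = deriv (deriv (h t)) :=
      funext fun x => (F1 t x).symm
    rw [e]
    exact periodic_deriv' (periodic_deriv' (per_h t))
  have per_f0 : ∀ t : ℝ,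
      Function.Periodic (fun x => Real.sinh (pd (0,1) (pd (0,1) U) (t, x))) L :=
    fun t x => congrArg Real.sinh (per_g2 t x)
  have per_f1 : ∀ t : ℝ,
      Function.Periodic
        (fun x => pd (0,1) (fun p => Real.sinh (pd (0,1) (pd (0,1) U) p)) (t, x)) L := by
    intro t
    have e : (fun x => pd (0,1) (fun p => Real.sinh (pd (0,1) (pd (0,1) U) p)) (t, x))
        = deriv (fun x => Real.sinh (pd (0,1) (pd (0,1) U) (t, x))) :=
      funext fun x => ((hasDerivAt_pd_snd cq t x).deriv).symm
    rw [e]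
    exact periodic_deriv' (per_f0 t)
  have per_G0 : ∀ t : ℝ, Function.Periodic (fun x => pd (1,0) U (t, x)) L := by
    intro t x
    show pd (1,0) U (t, x + L) = pd (1,0) U (t, x)
    rw [← F2 t (x + L), ← F2 t x]
    congr 1
    funext s
    exact hper s x
  have per_G1 : ∀ t : ℝ, Function.Periodic (fun x => pd (0,1) (pd (1,0) U) (t, x)) L := by
    intro t
    have e : (fun x => pd (0,1) (pd (1,0) U) (t, x)) = deriv (fun x => pd (1,0) U (t, x)) :=
      funext fun x => ((hasDerivAt_pd_snd cgt t x).deriv).symm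
    rw [e]
    exact periodic_deriv' (per_G0 t)
  -- value identification via integration by parts, for t ≥ 0
  have hval : ∀ t : ℝ, 0 ≤ t →
      (∫ x in (0:ℝ)..L, Real.sinh (pd (0,1) (pd (0,1) U) (t, x))
          * pd (1,0) (pd (0,1) (pd (0,1) U)) (t, x))
        = - ∫ x in (0:ℝ)..L, (pd (1,0) U (t, x)) ^ 2 := by
    intro t ht
    have e_swap : (∫ x in (0:ℝ)..L, Real.sinh (pd (0,1) (pd (0,1) U) (t, x))
          * pd (1,0) (pd (0,1) (pd (0,1) U)) (t, x))
        = ∫ x in (0:ℝ)..L, Real.sinh (pd (0,1) (pd (0,1) U) (t, x))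
          * pd (0,1) (pd (0,1) (pd (1,0) U)) (t, x) := by
      simp only [swap]
    have ibp1 := intervalIntegral.integral_mul_deriv_eq_deriv_mul
      (u := fun x => Real.sinh (pd (0,1) (pd (0,1) U) (t, x)))
      (u' := fun x => pd (0,1) (fun p => Real.sinh (pd (0,1) (pd (0,1) U) p)) (t, x))
      (v := fun x => pd (0,1) (pd (1,0) U) (t, x))
      (v' := fun x => pd (0,1) (pd (0,1) (pd (1,0) U)) (t, x)) (a := (0:ℝ)) (b := L)
      (fun x _ => hasDerivAt_pd_snd cq t x)
      (fun x _ => hasDerivAt_pd_snd cgt1 t x)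
      ((contOf cq1 t).intervalIntegrable _ _)
      ((contOf cgt2 t).intervalIntegrable _ _)
    have ibp2 := intervalIntegral.integral_mul_deriv_eq_deriv_mul
      (u := fun x => pd (0,1) (fun p => Real.sinh (pd (0,1) (pd (0,1) U) p)) (t, x))
      (u' := fun x => pd (0,1) (pd (0,1) (fun p => Real.sinh (pd (0,1) (pd (0,1) U) p))) (t, x))
      (v := fun x => pd (1,0) U (t, x))
      (v' := fun x => pd (0,1) (pd (1,0) U) (t, x)) (a := (0:ℝ)) (b := L)
      (fun x _ => hasDerivAt_pd_snd cq1 t x)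
      (fun x _ => hasDerivAt_pd_snd cgt t x)
      ((contOf cq2 t).intervalIntegrable _ _)
      ((contOf cgt1 t).intervalIntegrable _ _)
    have b1 : Real.sinh (pd (0,1) (pd (0,1) U) (t, L)) = Real.sinh (pd (0,1) (pd (0,1) U) (t, 0)) := by
      have := per_f0 t 0; simpa using this
    have b2 : pd (0,1) (pd (1,0) U) (t, L) = pd (0,1) (pd (1,0) U) (t, 0) := by
      have := per_G1 t 0; simpa using this
    have b3 : pd (0,1) (fun p => Real.sinh (pd (0,1) (pd (0,1) U) p)) (t, L)
        = pd (0,1) (fun p => Real.sinh (pd (0,1) (pd (0,1) U) p)) (t, 0) := by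
      have := per_f1 t 0; simpa using this
    have b4 : pd (1,0) U (t, L) = pd (1,0) U (t, 0) := by
      have := per_G0 t 0; simpa using this
    have elast : (∫ x in (0:ℝ)..L,
        pd (0,1) (pd (0,1) (fun p => Real.sinh (pd (0,1) (pd (0,1) U) p))) (t, x)
          * pd (1,0) U (t, x))
        = - ∫ x in (0:ℝ)..L, (pd (1,0) U (t, x)) ^ 2 := by
      rw [← intervalIntegral.integral_neg]
      apply intervalIntegral.integral_congr
      intro x _
      simp only [PDE' t x ht]
      ring
    rw [e_swap, ibp1, ibp2]
    simp only [b1, b2, b3, b4]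
    rw [elast]
    ring
  -- the first conjunct
  have first : ∀ t, 0 ≤ t →
      HasDerivAt (fun s => ∫ x in (0:ℝ)..L, Real.cosh (deriv (deriv (h s)) x))
        (- ∫ x in (0:ℝ)..L, (deriv (fun s => h s x) t) ^ 2) t := by
    intro t ht
    have e0 : (fun s => ∫ x in (0:ℝ)..L, Real.cosh (deriv (deriv (h s)) x))
        = fun s => ∫ x in (0:ℝ)..L, Real.cosh (pd (0,1) (pd (0,1) U) (s, x)) := by
      funext s
      apply intervalIntegral.integral_congr
      intro x _
      simp only [F1]
    have e1 : (- ∫ x in (0:ℝ)..L, (deriv (fun s => h s x) t) ^ 2)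
        = - ∫ x in (0:ℝ)..L, (pd (1,0) U (t, x)) ^ 2 := by
      congr 1
      apply intervalIntegral.integral_congr
      intro x _
      simp only [F2]
    rw [e0, e1, ← hval t ht]
    exact hmain t
  refine ⟨first, ?_⟩
  intro t ht
  have mono : AntitoneOn
      (fun s => ∫ x in (0:ℝ)..L, Real.cosh (deriv (deriv (h s)) x)) (Set.Ici (0:ℝ)) := by
    apply antitoneOn_of_deriv_nonpos (convex_Ici 0)
    · intro s hs
      exact (first s hs).continuousAt.continuousWithinAt
    · intro s hs
      rw [interior_Ici] at hs
      exact (first s hs.le).differentiableAt.differentiableWithinAt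
    · intro s hs
      rw [interior_Ici] at hs
      rw [(first s hs.le).deriv]
      have hnn : 0 ≤ ∫ x in (0:ℝ)..L, (deriv (fun r => h r x) s) ^ 2 :=
        intervalIntegral.integral_nonneg hL.le fun x _ => sq_nonneg _
      linarith
  exact mono Set.self_mem_Ici ht ht
end

section
/- Let L > 0 and let h be a smooth solution of the Metropolis crystal-surface PDE on t ≥ 0. Then the L² norm of the solution is nonincreasing in time: for all 0 ≤ s ≤ t, ∫₀ᴸ h(t,x)² dx ≤ ∫₀ᴸ h(s,x)² dx. -/
open Real MeasureTheory Set intervalIntegral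

private lemma one_le_itop : ((⊤ : ℕ∞) : WithTop ℕ∞) ≠ 0 := by
  simp

-- periodic derivative
private lemma per_deriv {f : ℝ → ℝ} {L : ℝ} (hf : Function.Periodic f L) :
    Function.Periodic (deriv f) L := by
  intro x
  have h1 : deriv (fun y => f (y + L)) x = deriv f (x + L) := deriv_comp_add_const f L x
  have h2 : (fun y => f (y + L)) = f := funext fun y => hf y
  rw [h2] at h1
  exact h1.symm

-- z * sinh z ≥ 0
private lemma sinh_self_nonneg (z : ℝ) : 0 ≤ z * Real.sinh z := by
  rcases le_or_gt 0 z with hz | hz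
  · exact mul_nonneg hz (by rwa [Real.sinh_nonneg_iff])
  · nlinarith [Real.sinh_nonpos_iff.2 hz.le]

-- double integration by parts for periodic smooth functions
private lemma parts {L : ℝ} (hL : 0 ≤ L) {f g : ℝ → ℝ}
    (hf : ContDiff ℝ (⊤ : ℕ∞) f) (hg : ContDiff ℝ (⊤ : ℕ∞) g)
    (hfp : Function.Periodic f L) (hgp : Function.Periodic g L) :
    ∫ x in (0:ℝ)..L, f x * deriv (deriv g) x = ∫ x in (0:ℝ)..L, deriv (deriv f) x * g x := by
  have dsm : ∀ (u : ℝ → ℝ), ContDiff ℝ (⊤ : ℕ∞) u → ContDiff ℝ (⊤ : ℕ∞) (deriv u) :=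
    fun u hu => (contDiff_infty_iff_deriv.1 hu).2
  have hdf := dsm f hf
  have hdg := dsm g hg
  have hddf := dsm _ hdf
  have hddg := dsm _ hdg
  have I1 : ∫ x in (0:ℝ)..L, f x * deriv (deriv g) x
      = f L * deriv g L - f 0 * deriv g 0 - ∫ x in (0:ℝ)..L, deriv f x * deriv g x := by
    apply intervalIntegral.integral_mul_deriv_eq_deriv_mul
    · exact fun x _ => (hf.differentiable one_le_itop x).hasDerivAt
    · exact fun x _ => (hdg.differentiable one_le_itop x).hasDerivAt
    · exact (hdf.continuous).intervalIntegrable _ _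
    · exact (hddg.continuous).intervalIntegrable _ _
  have I2 : ∫ x in (0:ℝ)..L, deriv f x * deriv g x
      = deriv f L * g L - deriv f 0 * g 0 - ∫ x in (0:ℝ)..L, deriv (deriv f) x * g x := by
    apply intervalIntegral.integral_mul_deriv_eq_deriv_mul
    · exact fun x _ => (hdf.differentiable one_le_itop x).hasDerivAt
    · exact fun x _ => (hg.differentiable one_le_itop x).hasDerivAt
    · exact (hddf.continuous).intervalIntegrable _ _
    · exact (hdg.continuous).intervalIntegrable _ _
  have e1 : f L = f 0 := by simpa using hfp 0
  have e2 : deriv g L = deriv g 0 := by simpa using per_deriv hgp 0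
  have e3 : deriv f L = deriv f 0 := by simpa using per_deriv hfp 0
  have e4 : g L = g 0 := by simpa using hgp 0
  rw [I1, I2, e1, e2, e3, e4]
  ring

/-- the L² norm of a smooth solution of the Metropolis
crystal-surface PDE is nonincreasing in time. -/
theorem l2_norm_nonincreasing
    (L : ℝ) (hL : 0 < L)
    (h : ℝ → ℝ → ℝ)
    (hsmooth : ContDiff ℝ (⊤ : ℕ∞) (fun p : ℝ × ℝ => h p.1 p.2))
    (hper : ∀ t x, h t (x + L) = h t x)
    (hpde : ∀ t x, 0 ≤ t →
      deriv (fun s => h s x) t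
        = - deriv (deriv (fun y => Real.sinh (deriv (deriv (h t)) y))) x) :
    ∀ s t, 0 ≤ s → s ≤ t →
      (∫ x in (0:ℝ)..L, (h t x) ^ 2) ≤ ∫ x in (0:ℝ)..L, (h s x) ^ 2 := by
  have hsm : ContDiff ℝ (⊤ : ℕ∞) (fun p : ℝ × ℝ => h p.1 p.2) := hsmooth.of_le (by simp)
  set H : ℝ × ℝ → ℝ := fun p => h p.1 p.2 with hHdef
  -- smoothness in x
  have hx : ∀ t, ContDiff ℝ (⊤ : ℕ∞) (h t) := fun t =>
    hsm.comp ((contDiff_const : ContDiff ℝ (⊤ : ℕ∞) fun _ : ℝ => t).prodMk contDiff_id)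
  have hcont : Continuous H := hsm.continuous
  -- time partial derivative
  set Ht : ℝ → ℝ → ℝ := fun t x => fderiv ℝ H (t, x) (1, 0) with hHtdef
  have hHt : ∀ t x, HasDerivAt (fun s => h s x) (Ht t x) t := by
    intro t x
    have h1 : HasFDerivAt H (fderiv ℝ H (t, x)) (t, x) :=
      (hsm.differentiable one_le_itop (t, x)).hasFDerivAt
    have h2 : HasDerivAt (fun s : ℝ => (s, x)) ((1 : ℝ), (0 : ℝ)) t :=
      (hasDerivAt_id t).prodMk (hasDerivAt_const t x)
    exact h1.comp_hasDerivAt t h2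
  have hHtc : Continuous (fun p : ℝ × ℝ => Ht p.1 p.2) := by
    have := hsm.continuous_fderiv one_le_itop
    exact this.clm_apply continuous_const
  -- periodicity
  have hperf : ∀ t, Function.Periodic (h t) L := fun t x => hper t x
  -- sinh of second derivative
  set w : ℝ → ℝ → ℝ := fun t y => Real.sinh (deriv (deriv (h t)) y) with hwdef
  have dsm : ∀ (u : ℝ → ℝ), ContDiff ℝ (⊤ : ℕ∞) u → ContDiff ℝ (⊤ : ℕ∞) (deriv u) :=
    fun u hu => (contDiff_infty_iff_deriv.1 hu).2
  have hwsm : ∀ t, ContDiff ℝ (⊤ : ℕ∞) (w t) := fun t =>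
    (Real.contDiff_sinh.of_le le_top).comp (dsm _ (dsm _ (hx t)))
  have hwper : ∀ t, Function.Periodic (w t) L := by
    intro t x
    simp only [hwdef]
    rw [per_deriv (per_deriv (hperf t)) x]
  -- the energy functional
  set F : ℝ → ℝ := fun t => ∫ x in (0:ℝ)..L, (h t x) ^ 2 with hFdef
  set F' : ℝ → ℝ := fun t => ∫ x in (0:ℝ)..L, 2 * h t x * Ht t x with hF'def
  -- derivative of F
  have hFderiv : ∀ t₀, HasDerivAt F (F' t₀) t₀ := by
    intro t₀
    -- bound on the compact set
    obtain ⟨C, hC⟩ : ∃ C, ∀ p ∈ (Icc (t₀ - 1) (t₀ + 1) ×ˢ Icc (0:ℝ) L),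
        ‖2 * h p.1 p.2 * Ht p.1 p.2‖ ≤ C := by
      apply IsCompact.exists_bound_of_continuousOn (isCompact_Icc.prod isCompact_Icc)
      exact ((continuous_const.mul hcont).mul hHtc).continuousOn
    have main := intervalIntegral.hasDerivAt_integral_of_dominated_loc_of_deriv_le
      (F := fun t x => (h t x) ^ 2) (F' := fun t x => 2 * h t x * Ht t x)
      (x₀ := t₀) (a := 0) (b := L) (bound := fun _ => C) (μ := volume)
      (Metric.ball_mem_nhds t₀ one_pos)
      (Filter.Eventually.of_forall fun s =>
        (((hx s).continuous).pow 2).aestronglyMeasurable.restrict)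
      ((((hx t₀).continuous).pow 2).intervalIntegrable _ _)
      (((continuous_const.mul ((hx t₀).continuous)).mul
        (hHtc.comp (Continuous.prodMk_right t₀))).aestronglyMeasurable.restrict)
      ?_ (intervalIntegrable_const) ?_
    · exact main.2
    · refine Filter.Eventually.of_forall fun x hx' s hs => ?_
      have hx2 : x ∈ Icc (0:ℝ) L := by
        rw [Set.uIoc_of_le hL.le] at hx'
        exact ⟨hx'.1.le, hx'.2⟩
      have hs2 : s ∈ Icc (t₀ - 1) (t₀ + 1) := by
        rw [Metric.mem_ball, Real.dist_eq, abs_lt] at hs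
        constructor <;> linarith [hs.1, hs.2]
      exact hC (s, x) ⟨hs2, hx2⟩
    · refine Filter.Eventually.of_forall fun x _ s _ => ?_
      have := (hHt s x).fun_pow 2
      simpa [mul_comm, mul_assoc, mul_left_comm] using this
  -- F' is nonpositive for t ≥ 0
  have hF'nonpos : ∀ t, 0 ≤ t → F' t ≤ 0 := by
    intro t ht
    have key : ∀ x, 2 * h t x * Ht t x = -(2 * (h t x * deriv (deriv (w t)) x)) := by
      intro x
      have e1 : Ht t x = deriv (fun s => h s x) t := ((hHt t x).deriv).symm
      rw [e1, hpde t x ht]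
      ring
    have : F' t = ∫ x in (0:ℝ)..L, -(2 * (h t x * deriv (deriv (w t)) x)) := by
      simp only [hF'def]
      congr 1
      funext x
      exact key x
    rw [this]
    rw [intervalIntegral.integral_neg, intervalIntegral.integral_const_mul]
    have hparts := parts hL.le (hx t) (hwsm t) (hperf t) (hwper t)
    rw [hparts]
    have hnn : 0 ≤ ∫ x in (0:ℝ)..L, deriv (deriv (h t)) x * w t x := by
      apply intervalIntegral.integral_nonneg hL.le
      intro x _
      exact sinh_self_nonneg _
    nlinarith
  -- conclude by monotonicity
  have hanti : AntitoneOn F (Ici (0:ℝ)) := by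
    apply antitoneOn_of_deriv_nonpos (convex_Ici 0)
    · exact fun t _ => ((hFderiv t).differentiableAt.continuousAt).continuousWithinAt
    · intro t ht
      exact ((hFderiv t).differentiableAt).differentiableWithinAt
    · intro t ht
      rw [interior_Ici] at ht
      rw [(hFderiv t).deriv]
      exact hF'nonpos t ht.le
  intro s t hs hst
  exact hanti (mem_Ici.2 hs) (mem_Ici.2 (hs.trans hst)) hst
end

section
/- Let β > 0, λ ∈ ℝ, and let m be an odd integer. Then ( Σ_{n∈ℤ} e^{mβn − βn² + λn} ) / ( Σ_{n∈ℤ} e^{−βn² + λn} ) = Z(β, λ/(2β)) · e^{β m²/4 + λ m/2}, where Z(β, α) = ( Σ_{n∈ℤ} e^{−β(n − α − 1/2)²} ) / ( Σ_{n∈ℤ} e^{−β(n − α)²} ). -/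
/-- The theta-function ratio Z(β, α) = (Σₙ e^{−β(n−α−1/2)²}) / (Σₙ e^{−β(n−α)²}). -/
noncomputable def thetaRatio (β α : ℝ) : ℝ :=
  (∑' n : ℤ, Real.exp (-β * ((n : ℝ) - α - 1 / 2) ^ 2))
    / (∑' n : ℤ, Real.exp (-β * ((n : ℝ) - α) ^ 2))

/-! Completing the square, e^{-βn² + cn} = e^{c²/4β} e^{-β(n - c/2β)²}, turns both sums into
Gaussian lattice sums centred at λ/2β and (λ + mβ)/2β = λ/2β + m/2. For odd m the second centre is
λ/2β + 1/2 up to an integer, which a lattice sum over ℤ does not see. -/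

open Real

theorem tsum_int_comp_sub_add_intCast {M : Type*} [AddCommMonoid M] [TopologicalSpace M]
    (f : ℝ → M) (x : ℝ) (k : ℤ) :
    ∑' n : ℤ, f (n - (x + k)) = ∑' n : ℤ, f (n - x) := by
  rw [← (Equiv.subRight k).tsum_eq fun n : ℤ => f (n - x)]
  refine tsum_congr fun n => congrArg f ?_
  push_cast [Equiv.subRight_apply]
  ring

theorem tsum_exp_neg_mul_sq_add_mul {β : ℝ} (hβ : β ≠ 0) (c : ℝ) :
    ∑' n : ℤ, exp (-β * (n : ℝ) ^ 2 + c * n)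
      = exp (c ^ 2 / (4 * β)) * ∑' n : ℤ, exp (-β * ((n : ℝ) - c / (2 * β)) ^ 2) := by
  rw [← tsum_mul_left]
  refine tsum_congr fun n => ?_
  rw [← exp_add]
  congr 1
  field_simp
  ring

/-- for β > 0, λ ∈ ℝ and m an odd integer, the expectation of
e^{mβz} under the discrete Gaussian weight n ↦ e^{−βn² + λn} on ℤ equals
Z(β, λ/(2β)) · e^{βm²/4 + λm/2}. -/
theorem discrete_gaussian_exponential_expectation_odd
    (β : ℝ) (hβ : 0 < β) (lam : ℝ) (m : ℤ) (hm : Odd m) :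
    (∑' n : ℤ, Real.exp ((m : ℝ) * β * (n : ℝ) - β * (n : ℝ) ^ 2 + lam * (n : ℝ)))
      / (∑' n : ℤ, Real.exp (-β * (n : ℝ) ^ 2 + lam * (n : ℝ)))
    = thetaRatio β (lam / (2 * β))
        * Real.exp (β * (m : ℝ) ^ 2 / 4 + lam * (m : ℝ) / 2) := by
  obtain ⟨k, rfl⟩ := hm
  have hnum : ∑' n : ℤ, exp ((2 * k + 1 : ℤ) * β * (n : ℝ) - β * (n : ℝ) ^ 2 + lam * n)
      = exp ((lam + (2 * k + 1 : ℤ) * β) ^ 2 / (4 * β))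
        * ∑' n : ℤ, exp (-β * ((n : ℝ) - lam / (2 * β) - 1 / 2) ^ 2) := by
    have hcentre : (lam + (2 * k + 1 : ℤ) * β) / (2 * β) = (lam / (2 * β) + 1 / 2) + k := by
      field_simp
      push_cast
      ring
    calc _ = ∑' n : ℤ, exp (-β * (n : ℝ) ^ 2 + (lam + (2 * k + 1 : ℤ) * β) * n) :=
          tsum_congr fun n => by ring_nf
      _ = _ := by
        rw [tsum_exp_neg_mul_sq_add_mul hβ.ne', hcentre,
          tsum_int_comp_sub_add_intCast (fun y => exp (-β * y ^ 2))]
        simp only [sub_add_eq_sub_sub]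
  rw [hnum, tsum_exp_neg_mul_sq_add_mul hβ.ne', thetaRatio, mul_div_mul_comm, ← exp_sub, mul_comm]
  congr 2
  field_simp
  ring
end

section
/- Fix α ∈ ℝ. Then Z(β, α) = 1 + o(β) as β → 0⁺; that is, lim_{β→0⁺} (Z(β, α) − 1)/β = 0. -/
open Real Filter Topology HurwitzZeta

theorem tendsto_rpow_mul_cosKernel_sub_one (a : UnitAddCircle) (s : ℝ) :
    Tendsto (fun x ↦ x ^ s * (cosKernel a x - 1)) atTop (𝓝 0) := by
  obtain ⟨p, hp, hO⟩ := isBigO_atTop_cosKernel_sub a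
  exact ((Asymptotics.isBigO_refl (fun x : ℝ ↦ x ^ s) atTop).mul hO).trans_tendsto
    (tendsto_rpow_mul_exp_neg_mul_atTop_nhds_zero s p hp)

theorem tendsto_cosKernel_atTop (a : UnitAddCircle) : Tendsto (cosKernel a) atTop (𝓝 1) := by
  simpa using (tendsto_rpow_mul_cosKernel_sub_one a 0).add_const 1

theorem tsum_exp_neg_mul_sub_sq {β : ℝ} (hβ : 0 < β) (c : ℝ) :
    ∑' n : ℤ, rexp (-β * (n - c) ^ 2) = evenKernel c (β / π) := by
  rw [← evenKernel_neg, ← AddCircle.coe_neg,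
    ← (hasSum_int_evenKernel (-c) (div_pos hβ pi_pos)).tsum_eq]
  refine tsum_congr fun n ↦ congrArg rexp ?_
  field_simp
  ring

theorem thetaRatio_eq_cosKernel_div_cosKernel {β : ℝ} (hβ : 0 < β) (α : ℝ) :
    thetaRatio β α = cosKernel ↑(α + 1 / 2) (π / β) / cosKernel α (π / β) := by
  have hscale : (1 : ℝ) / (β / π) ^ (1 / 2 : ℝ) ≠ 0 := by
    have := div_pos hβ pi_pos
    positivity
  simp only [thetaRatio, sub_sub, tsum_exp_neg_mul_sub_sq hβ, evenKernel_functional_equation,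
    one_div_div]
  exact mul_div_mul_left _ _ hscale

/-- Z(β, α) = 1 + o(β) as β → 0⁺, i.e.
lim_{β→0⁺} (Z(β, α) − 1)/β = 0. -/
theorem thetaRatio_one_plus_little_o
    (α : ℝ) :
    Filter.Tendsto (fun β => (thetaRatio β α - 1) / β)
      (nhdsWithin 0 (Set.Ioi 0)) (nhds 0) := by
  have hx : Tendsto (fun β : ℝ ↦ π / β) (𝓝[>] 0) atTop :=
    tendsto_inv_nhdsGT_zero.const_mul_atTop pi_pos
  have hlim : Tendsto (fun x ↦ π⁻¹ * ((x ^ (1 : ℝ) * (cosKernel ↑(α + 1 / 2) x - 1)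
      - x ^ (1 : ℝ) * (cosKernel α x - 1)) / cosKernel α x)) atTop (𝓝 0) := by
    simpa using (((tendsto_rpow_mul_cosKernel_sub_one _ 1).sub
      (tendsto_rpow_mul_cosKernel_sub_one _ 1)).div (tendsto_cosKernel_atTop _)
      one_ne_zero).const_mul π⁻¹
  refine (hlim.comp hx).congr' ?_
  filter_upwards [self_mem_nhdsWithin,
    hx.eventually ((tendsto_cosKernel_atTop α).eventually_ne one_ne_zero)] with β hβ hD
  rw [Function.comp_apply, thetaRatio_eq_cosKernel_div_cosKernel hβ, rpow_one]
  field_simp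
  ring
end

section
/- Let β > 0 and λ₁, λ₂, λ₃ ∈ ℝ, and let E denote expectation with respect to the product measure on ℤ³ with weight w(n₁,n₂,n₃) = e^{−βn₁² + λ₁n₁} e^{−βn₂² + λ₂n₂} e^{−βn₃² + λ₃n₃}, i.e. E[f] = ( Σ_{(n₁,n₂,n₃)∈ℤ³} f(n₁,n₂,n₃) w(n₁,n₂,n₃) ) / ( Σ_{(n₁,n₂,n₃)∈ℤ³} w(n₁,n₂,n₃) ). Then E[ e^{β(n₁ − 2n₂ + n₃)} ] = e^{3β/2} e^{(λ₁ − 2λ₂ + λ₃)/2} Z(β, λ₁/(2β)) Z(β, λ₃/(2β)), and consequently E[ e^{β(n₁ − 2n₂ + n₃)} ] − E[ e^{−β(n₁ − 2n₂ + n₃)} ] = 2 e^{3β/2} Z(β, λ₁/(2β)) Z(β, λ₃/(2β)) · sinh( (λ₁ − 2λ₂ + λ₃)/2 ). -/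
/-- The local Gibbs product weight on ℤ³ with parameters β, λ₁, λ₂, λ₃. -/
noncomputable def gibbsWeight (β lam₁ lam₂ lam₃ : ℝ) (n : ℤ × ℤ × ℤ) : ℝ :=
  Real.exp (-β * (n.1 : ℝ) ^ 2 + lam₁ * (n.1 : ℝ))
    * Real.exp (-β * (n.2.1 : ℝ) ^ 2 + lam₂ * (n.2.1 : ℝ))
    * Real.exp (-β * (n.2.2 : ℝ) ^ 2 + lam₃ * (n.2.2 : ℝ))

/-- Expectation with respect to the local Gibbs product measure on ℤ³. -/
noncomputable def gibbsExpect (β lam₁ lam₂ lam₃ : ℝ) (f : ℤ × ℤ × ℤ → ℝ) : ℝ :=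
  (∑' n : ℤ × ℤ × ℤ, f n * gibbsWeight β lam₁ lam₂ lam₃ n)
    / (∑' n : ℤ × ℤ × ℤ, gibbsWeight β lam₁ lam₂ lam₃ n)

/-
The Gibbs measure is a product, so the expectation of the exponential of a linear form in
`n₁, n₂, n₃` factors into ratios `S(λ + t) / S(λ)` of one-dimensional partition functions
`S(c) = ∑ₙ e^{-βn² + cn}`. The shift `n ↦ n + 1` gives `S(c + 2β) = e^{c+β} S(c)`, which evaluates
the middle factor (shift by `∓2β`) and reduces `S(λ - β)` to `S(λ + β)`; completing the square,
`S(c) = e^{c²/4β} ∑ₙ e^{-β(n - c/2β)²}`, turns `S(λ + β) / S(λ)` into `e^{λ/2 + β/4} Z(β, λ/2β)`.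
-/

open Real

noncomputable def partitionFn (β c : ℝ) : ℝ := ∑' n : ℤ, rexp (-β * (n : ℝ) ^ 2 + c * n)

lemma summable_exp_neg_mul_sq_add_mul {β : ℝ} (hβ : 0 < β) (c : ℝ) :
    Summable fun n : ℤ => rexp (-β * (n : ℝ) ^ 2 + c * n) := by
  have hτ : 0 < (Complex.I * (β / π : ℝ)).im := by simpa using div_pos hβ pi_pos
  refine ((summable_jacobiTheta₂_term_iff (Complex.I * (-c / (2 * π) : ℝ)) _).mpr hτ).norm.congr
    fun n => ?_
  rw [norm_jacobiTheta₂_term]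
  simp only [Complex.mul_im, Complex.I_re, Complex.I_im, Complex.ofReal_re, Complex.ofReal_im]
  congr 1
  field_simp
  ring

lemma partitionFn_pos {β : ℝ} (hβ : 0 < β) (c : ℝ) : 0 < partitionFn β c :=
  (summable_exp_neg_mul_sq_add_mul hβ c).tsum_pos (fun _ => (exp_pos _).le) 0 (exp_pos _)

lemma partitionFn_add_two_mul (β c : ℝ) :
    partitionFn β (c + 2 * β) = rexp (c + β) * partitionFn β c := by
  rw [partitionFn, partitionFn, ← tsum_mul_left, ← (Equiv.addRight (1 : ℤ)).tsum_eq]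
  congr 1 with n
  rw [← exp_add]
  simp only [Equiv.coe_addRight, Int.cast_add, Int.cast_one]
  ring_nf

lemma partitionFn_eq_exp_mul_tsum {β : ℝ} (hβ : β ≠ 0) (c : ℝ) :
    partitionFn β c
      = rexp (c ^ 2 / (4 * β)) * ∑' n : ℤ, rexp (-β * ((n : ℝ) - c / (2 * β)) ^ 2) := by
  rw [partitionFn, ← tsum_mul_left]
  congr 1 with n
  rw [← exp_add]
  congr 1
  field_simp
  ring

lemma partitionFn_add_div_partitionFn {β : ℝ} (hβ : β ≠ 0) (c : ℝ) :
    partitionFn β (c + β) / partitionFn β c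
      = rexp (c / 2 + β / 4) * thetaRatio β (c / (2 * β)) := by
  have hshift : (c + β) / (2 * β) = c / (2 * β) + 1 / 2 := by field_simp
  rw [partitionFn_eq_exp_mul_tsum hβ, partitionFn_eq_exp_mul_tsum hβ, hshift, mul_div_mul_comm,
    ← exp_sub, thetaRatio]
  simp only [← sub_sub]
  congr 2
  field_simp
  ring

lemma partitionFn_sub_div_partitionFn {β : ℝ} (hβ : β ≠ 0) (c : ℝ) :
    partitionFn β (c - β) / partitionFn β c
      = rexp (-c / 2 + β / 4) * thetaRatio β (c / (2 * β)) := by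
  have h := partitionFn_add_two_mul β (c - β)
  rw [show c - β + 2 * β = c + β by ring, sub_add_cancel] at h
  calc partitionFn β (c - β) / partitionFn β c
      = rexp (-c) * (partitionFn β (c + β) / partitionFn β c) := by
        rw [h, ← mul_div_assoc, ← mul_assoc, ← exp_add, neg_add_cancel, exp_zero, one_mul]
    _ = rexp (-c / 2 + β / 4) * thetaRatio β (c / (2 * β)) := by
        rw [partitionFn_add_div_partitionFn hβ, ← mul_assoc, ← exp_add]
        ring_nf

lemma partitionFn_add_two_mul_div_partitionFn {β : ℝ} (hβ : 0 < β) (c : ℝ) :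
    partitionFn β (c + 2 * β) / partitionFn β c = rexp (c + β) := by
  rw [partitionFn_add_two_mul, mul_div_assoc, div_self (partitionFn_pos hβ c).ne', mul_one]

lemma partitionFn_sub_two_mul_div_partitionFn {β : ℝ} (hβ : 0 < β) (c : ℝ) :
    partitionFn β (c - 2 * β) / partitionFn β c = rexp (β - c) := by
  have h := partitionFn_add_two_mul β (c - 2 * β)
  rw [sub_add_cancel] at h
  rw [h, div_mul_cancel_right₀ (partitionFn_pos hβ _).ne', ← exp_neg]
  ring_nf

lemma tsum_mul_tsum_mul_tsum_of_summable_norm {ι R : Type*} [NormedRing R] [CompleteSpace R]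
    {f g h : ι → R} (hf : Summable fun i => ‖f i‖) (hg : Summable fun i => ‖g i‖)
    (hh : Summable fun i => ‖h i‖) :
    (∑' i, f i) * (∑' i, g i) * (∑' i, h i) = ∑' n : ι × ι × ι, f n.1 * g n.2.1 * h n.2.2 := by
  rw [mul_assoc, tsum_mul_tsum_of_summable_norm hg hh,
    tsum_mul_tsum_of_summable_norm hf (hg.mul_norm hh)]
  simp only [mul_assoc]

lemma tsum_exp_mul_gibbsWeight {β : ℝ} (hβ : 0 < β) (lam₁ lam₂ lam₃ a b c : ℝ) :
    ∑' n : ℤ × ℤ × ℤ, rexp (a * n.1 + b * n.2.1 + c * n.2.2) * gibbsWeight β lam₁ lam₂ lam₃ n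
      = partitionFn β (lam₁ + a) * partitionFn β (lam₂ + b) * partitionFn β (lam₃ + c) := by
  have hnorm (c : ℝ) : Summable fun n : ℤ => ‖rexp (-β * (n : ℝ) ^ 2 + c * n)‖ :=
    (summable_exp_neg_mul_sq_add_mul hβ c).norm
  rw [partitionFn, partitionFn, partitionFn,
    tsum_mul_tsum_mul_tsum_of_summable_norm (hnorm _) (hnorm _) (hnorm _)]
  congr 1 with n
  simp only [gibbsWeight, ← exp_add]
  ring_nf

lemma gibbsExpect_exp {β : ℝ} (hβ : 0 < β) (lam₁ lam₂ lam₃ a b c : ℝ) :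
    gibbsExpect β lam₁ lam₂ lam₃ (fun n => rexp (a * n.1 + b * n.2.1 + c * n.2.2))
      = partitionFn β (lam₁ + a) / partitionFn β lam₁
        * (partitionFn β (lam₂ + b) / partitionFn β lam₂)
        * (partitionFn β (lam₃ + c) / partitionFn β lam₃) := by
  have hden := tsum_exp_mul_gibbsWeight hβ lam₁ lam₂ lam₃ 0 0 0
  simp only [zero_mul, add_zero, exp_zero, one_mul] at hden
  rw [gibbsExpect, tsum_exp_mul_gibbsWeight hβ, hden, mul_div_mul_comm, mul_div_mul_comm]

/-- expectation of the Metropolis rate observable under the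
local Gibbs measure:
E[e^{β(n₁−2n₂+n₃)}] = e^{3β/2} e^{(λ₁−2λ₂+λ₃)/2} Z(β,λ₁/(2β)) Z(β,λ₃/(2β)),
and consequently the expected current equals
2 e^{3β/2} Z(β,λ₁/(2β)) Z(β,λ₃/(2β)) sinh((λ₁−2λ₂+λ₃)/2). -/
theorem gibbs_rate_expectation
    (β : ℝ) (hβ : 0 < β) (lam₁ lam₂ lam₃ : ℝ) :
    gibbsExpect β lam₁ lam₂ lam₃
        (fun n => Real.exp (β * ((n.1 : ℝ) - 2 * (n.2.1 : ℝ) + (n.2.2 : ℝ))))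
      = Real.exp (3 * β / 2) * Real.exp ((lam₁ - 2 * lam₂ + lam₃) / 2)
          * thetaRatio β (lam₁ / (2 * β)) * thetaRatio β (lam₃ / (2 * β))
    ∧ gibbsExpect β lam₁ lam₂ lam₃
        (fun n => Real.exp (β * ((n.1 : ℝ) - 2 * (n.2.1 : ℝ) + (n.2.2 : ℝ))))
      - gibbsExpect β lam₁ lam₂ lam₃
        (fun n => Real.exp (-β * ((n.1 : ℝ) - 2 * (n.2.1 : ℝ) + (n.2.2 : ℝ))))
      = 2 * Real.exp (3 * β / 2)
          * thetaRatio β (lam₁ / (2 * β)) * thetaRatio β (lam₃ / (2 * β))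
          * Real.sinh ((lam₁ - 2 * lam₂ + lam₃) / 2) := by
  have hrate (t : ℝ) :
      gibbsExpect β lam₁ lam₂ lam₃ (fun n => rexp (t * ((n.1 : ℝ) - 2 * n.2.1 + n.2.2)))
        = partitionFn β (lam₁ + t) / partitionFn β lam₁
          * (partitionFn β (lam₂ - 2 * t) / partitionFn β lam₂)
          * (partitionFn β (lam₃ + t) / partitionFn β lam₃) := by
    rw [sub_eq_add_neg, ← neg_mul, ← gibbsExpect_exp hβ]
    congr 1 with n
    ring_nf
  have hplus := hrate β
  rw [partitionFn_add_div_partitionFn hβ.ne', partitionFn_sub_two_mul_div_partitionFn hβ,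
    partitionFn_add_div_partitionFn hβ.ne'] at hplus
  have hminus := hrate (-β)
  rw [← sub_eq_add_neg, ← sub_eq_add_neg, mul_neg, sub_neg_eq_add,
    partitionFn_sub_div_partitionFn hβ.ne', partitionFn_add_two_mul_div_partitionFn hβ,
    partitionFn_sub_div_partitionFn hβ.ne'] at hminus
  set Z₁ := thetaRatio β (lam₁ / (2 * β))
  set Z₃ := thetaRatio β (lam₃ / (2 * β))
  have hexp_plus : rexp (lam₁ / 2 + β / 4) * rexp (β - lam₂) * rexp (lam₃ / 2 + β / 4)
      = rexp (3 * β / 2) * rexp ((lam₁ - 2 * lam₂ + lam₃) / 2) := by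
    simp only [← exp_add]
    ring_nf
  have hexp_minus : rexp (-lam₁ / 2 + β / 4) * rexp (lam₂ + β) * rexp (-lam₃ / 2 + β / 4)
      = rexp (3 * β / 2) * rexp (-((lam₁ - 2 * lam₂ + lam₃) / 2)) := by
    simp only [← exp_add]
    ring_nf
  constructor
  · rw [hplus]
    linear_combination Z₁ * Z₃ * hexp_plus
  · rw [hplus, hminus, sinh_eq]
    linear_combination Z₁ * Z₃ * hexp_plus - Z₁ * Z₃ * hexp_minus
end
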